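/- Let β > 0, f(x) = βx²/2 on ℝ, and let X : (0,∞) → ℝ be a twice continuously differentiable solution of Ẍ(t) + (3/t)Ẋ(t) + βX(t) = 0. Let 0 < t₁ < t₂ with t₂ − t₁ > √(40/β), and set J[Y] = ∫_{t₁}^{t₂} t³( (1/2)Ẏ(t)² − βY(t)²/2 ) dt. Then X is a saddle point of J in the following sense: for every δ > 0 there exist continuously differentiable functions h₊, h₋ : [t₁,t₂] → ℝ with h₊(t₁) = h₊(t₂) = h₋(t₁) = h₋(t₂) = 0, with max_{t∈[t₁,t₂]} |h₊(t)| + max_{t∈[t₁,t₂]} |ḣ₊(t)| < δ and likewise for h₋, such that J[X + h₊] > J[X] and J[X + h₋] < J[X]. -/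

import Mathlib

/-!
The damped equation multiplied by `t³` is the Euler–Lagrange equation `(t³ Ẋ)' = -β t³ X` of the
action, so after an integration by parts the first variation vanishes and, the action being
quadratic, `J[X + c h] = J[X] + c² J[h]` for every admissible `h`. It therefore suffices to find
one admissible `h` with `J[h] > 0` and one with `J[h] < 0`, and to scale them down in `C¹`.
A fast oscillation `sin (k (t - t₁))` with `sin (k (t₂ - t₁)) = 0` and `k² t₁³ > β t₂³` has
positive action: its kinetic term dominates. The parabola `(t - t₁)(t₂ - t)` has negative
action once `β (t₂ - t₁)² > 40`, by an explicit polynomial integral.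
-/

open Set

/-- The action functional with vanishing damping `3/t` on `[t₁, t₂]` for the scalar quadratic
loss `f(x) = βx²/2`, evaluated on a curve `Y` with derivative `Y'`. -/
noncomputable def nesterovAction1D (β t₁ t₂ : ℝ) (Y Y' : ℝ → ℝ) : ℝ :=
  ∫ t in t₁..t₂, t ^ 3 * ((1 / 2) * (Y' t) ^ 2 - β * (Y t) ^ 2 / 2)

structure IsAdmissiblePerturbation (t₁ t₂ : ℝ) (h h' : ℝ → ℝ) : Prop where
  hasDerivWithinAt : ∀ t ∈ Icc t₁ t₂, HasDerivWithinAt h (h' t) (Icc t₁ t₂) t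
  continuousOn_deriv : ContinuousOn h' (Icc t₁ t₂)
  left_eq_zero : h t₁ = 0
  right_eq_zero : h t₂ = 0

noncomputable def c1NormOn (t₁ t₂ : ℝ) (h h' : ℝ → ℝ) : ℝ :=
  (⨆ t ∈ Icc t₁ t₂, |h t|) + (⨆ t ∈ Icc t₁ t₂, |h' t|)

namespace IsAdmissiblePerturbation

variable {t₁ t₂ : ℝ} {h h' : ℝ → ℝ}

theorem continuousOn (hh : IsAdmissiblePerturbation t₁ t₂ h h') : ContinuousOn h (Icc t₁ t₂) :=
  fun t ht => (hh.hasDerivWithinAt t ht).continuousWithinAt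

theorem const_mul (hh : IsAdmissiblePerturbation t₁ t₂ h h') (c : ℝ) :
    IsAdmissiblePerturbation t₁ t₂ (fun t => c * h t) (fun t => c * h' t) where
  hasDerivWithinAt t ht := (hh.hasDerivWithinAt t ht).const_mul c
  continuousOn_deriv := continuousOn_const.mul hh.continuousOn_deriv
  left_eq_zero := by simp [hh.left_eq_zero]
  right_eq_zero := by simp [hh.right_eq_zero]

theorem of_hasDerivAt (hd : ∀ t, HasDerivAt h (h' t) t) (hc : Continuous h')
    (h₁ : h t₁ = 0) (h₂ : h t₂ = 0) : IsAdmissiblePerturbation t₁ t₂ h h' where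
  hasDerivWithinAt t _ := (hd t).hasDerivWithinAt
  continuousOn_deriv := hc.continuousOn
  left_eq_zero := h₁
  right_eq_zero := h₂

end IsAdmissiblePerturbation

theorem c1NormOn_const_mul {t₁ t₂ c : ℝ} (hc : 0 ≤ c) (h h' : ℝ → ℝ) :
    c1NormOn t₁ t₂ (fun t => c * h t) (fun t => c * h' t) = c * c1NormOn t₁ t₂ h h' := by
  simp only [c1NormOn, abs_mul, abs_of_nonneg hc, mul_add, Real.mul_iSup_of_nonneg hc]

theorem c1NormOn_nonneg (t₁ t₂ : ℝ) (h h' : ℝ → ℝ) : 0 ≤ c1NormOn t₁ t₂ h h' :=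
  add_nonneg (Real.iSup_nonneg fun _ => Real.iSup_nonneg fun _ => abs_nonneg _)
    (Real.iSup_nonneg fun _ => Real.iSup_nonneg fun _ => abs_nonneg _)

theorem exists_pos_c1NormOn_const_mul_lt {δ : ℝ} (hδ : 0 < δ) (t₁ t₂ : ℝ) (h h' : ℝ → ℝ) :
    ∃ c > 0, c1NormOn t₁ t₂ (fun t => c * h t) (fun t => c * h' t) < δ := by
  have hN := c1NormOn_nonneg t₁ t₂ h h'
  refine ⟨δ / (c1NormOn t₁ t₂ h h' + 1), by positivity, ?_⟩
  rw [c1NormOn_const_mul (by positivity), div_mul_eq_mul_div, div_lt_iff₀ (by positivity)]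
  nlinarith

theorem nesterovAction1D_const_mul (β t₁ t₂ c : ℝ) (h h' : ℝ → ℝ) :
    nesterovAction1D β t₁ t₂ (fun t => c * h t) (fun t => c * h' t) =
      c ^ 2 * nesterovAction1D β t₁ t₂ h h' := by
  rw [nesterovAction1D, nesterovAction1D, ← intervalIntegral.integral_const_mul]
  congr 1
  ext t
  ring

theorem hasDerivAt_cube_mul_of_ode {β t : ℝ} {X X' X'' : ℝ → ℝ} (ht : 0 < t)
    (hX' : HasDerivAt X' (X'' t) t) (hODE : X'' t + (3 / t) * X' t + β * X t = 0) :
    HasDerivAt (fun s => s ^ 3 * X' s) (-(β * t ^ 3 * X t)) t := by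
  refine ((hasDerivAt_pow 3 t).mul hX').congr_deriv ?_
  have h3 : t ^ 3 * (3 / t) = 3 * t ^ 2 := by field_simp
  linear_combination t ^ 3 * hODE - X' t * h3

theorem nesterovAction1D_add {β t₁ t₂ : ℝ} (ht : t₁ ≤ t₂) {X X' h h' : ℝ → ℝ}
    (hX : ContinuousOn X (Icc t₁ t₂)) (hX' : ContinuousOn X' (Icc t₁ t₂))
    (hEL : ∀ t ∈ Ioo t₁ t₂, HasDerivAt (fun s => s ^ 3 * X' s) (-(β * t ^ 3 * X t)) t)
    (hh : IsAdmissiblePerturbation t₁ t₂ h h') :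
    nesterovAction1D β t₁ t₂ (X + h) (X' + h') =
      nesterovAction1D β t₁ t₂ X X' + nesterovAction1D β t₁ t₂ h h' := by
  have hc := hh.continuousOn
  have hc' := hh.continuousOn_deriv
  have first_variation : ∫ t in t₁..t₂, t ^ 3 * (X' t * h' t - β * (X t * h t)) = 0 := by
    rw [intervalIntegral.integral_eq_sub_of_hasDeriv_right_of_le ht
      (f := fun t => t ^ 3 * X' t * h t)]
    · simp [hh.left_eq_zero, hh.right_eq_zero]
    · fun_prop
    · intro t ht
      have hht := (hh.hasDerivWithinAt t (Ioo_subset_Icc_self ht)).hasDerivAt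
        (Icc_mem_nhds ht.1 ht.2)
      exact (((hEL t ht).mul hht).congr_deriv (by ring)).hasDerivWithinAt
    · exact ContinuousOn.intervalIntegrable_of_Icc ht (by fun_prop)
  calc nesterovAction1D β t₁ t₂ (X + h) (X' + h')
      = ∫ t in t₁..t₂, ((t ^ 3 * ((1 / 2) * (X' t) ^ 2 - β * (X t) ^ 2 / 2)
          + t ^ 3 * ((1 / 2) * (h' t) ^ 2 - β * (h t) ^ 2 / 2))
          + t ^ 3 * (X' t * h' t - β * (X t * h t))) := by
        unfold nesterovAction1D
        congr 1
        ext t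
        simp only [Pi.add_apply]
        ring
    _ = _ := by
        rw [intervalIntegral.integral_add, first_variation, add_zero,
          intervalIntegral.integral_add, nesterovAction1D, nesterovAction1D]
        all_goals exact ContinuousOn.intervalIntegrable_of_Icc ht (by fun_prop)

theorem nesterovAction1D_add_const_mul_of_ode {β t₁ t₂ : ℝ} {X X' X'' h h' : ℝ → ℝ}
    (hX : ∀ t ∈ Ioi (0 : ℝ), HasDerivAt X (X' t) t)
    (hX' : ∀ t ∈ Ioi (0 : ℝ), HasDerivAt X' (X'' t) t)
    (hODE : ∀ t ∈ Ioi (0 : ℝ), X'' t + (3 / t) * X' t + β * X t = 0)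
    (ht₁ : 0 < t₁) (ht : t₁ ≤ t₂) (hh : IsAdmissiblePerturbation t₁ t₂ h h') (c : ℝ) :
    nesterovAction1D β t₁ t₂ (X + fun t => c * h t) (X' + fun t => c * h' t) =
      nesterovAction1D β t₁ t₂ X X' + c ^ 2 * nesterovAction1D β t₁ t₂ h h' := by
  have hpos : Icc t₁ t₂ ⊆ Ioi 0 := fun t ht => ht₁.trans_le ht.1
  have hEL : ∀ t ∈ Ioo t₁ t₂, HasDerivAt (fun s => s ^ 3 * X' s) (-(β * t ^ 3 * X t)) t :=
    fun t ht =>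
      have ht0 := hpos (Ioo_subset_Icc_self ht)
      hasDerivAt_cube_mul_of_ode ht0 (hX' t ht0) (hODE t ht0)
  rw [nesterovAction1D_add ht (HasDerivAt.continuousOn fun t ht => hX t (hpos ht))
    (HasDerivAt.continuousOn fun t ht => hX' t (hpos ht)) hEL (hh.const_mul c),
    nesterovAction1D_const_mul]

theorem nesterovAction1D_bump (β a b : ℝ) :
    nesterovAction1D β a b (fun t => (t - a) * (b - t)) (fun t => a + b - 2 * t) =
      ((7 / 60 * (b - a) ^ 6 + 2 / 5 * a * (b - a) ^ 5 + 1 / 2 * a ^ 2 * (b - a) ^ 4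
        + 1 / 3 * a ^ 3 * (b - a) ^ 3)
      - β * (1 / 168 * (b - a) ^ 8 + 1 / 35 * a * (b - a) ^ 7 + 1 / 20 * a ^ 2 * (b - a) ^ 6
        + 1 / 30 * a ^ 3 * (b - a) ^ 5)) / 2 := by
  have hF : ∀ t, HasDerivAt (fun t => ((a + b) ^ 2 / 8 - β * a ^ 2 * b ^ 2 / 8) * t ^ 4
      + (β * a * b * (a + b) / 5 - 2 * (a + b) / 5) * t ^ 5
      + (1 / 3 - β * ((a + b) ^ 2 + 2 * a * b) / 12) * t ^ 6
      + β * (a + b) / 7 * t ^ 7 - β / 16 * t ^ 8)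
      (t ^ 3 * ((1 / 2) * (a + b - 2 * t) ^ 2 - β * ((t - a) * (b - t)) ^ 2 / 2)) t := fun t =>
    (((((hasDerivAt_pow 4 t).const_mul _).add ((hasDerivAt_pow 5 t).const_mul _)).add
      ((hasDerivAt_pow 6 t).const_mul _)).add ((hasDerivAt_pow 7 t).const_mul _)).sub
      ((hasDerivAt_pow 8 t).const_mul _) |>.congr_deriv (by push_cast; ring)
  rw [nesterovAction1D, intervalIntegral.integral_eq_sub_of_hasDerivAt (fun t _ => hF t)
    (by apply Continuous.intervalIntegrable; fun_prop)]
  ring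

theorem nesterovAction1D_bump_neg {β a b : ℝ} (ha : 0 ≤ a) (hab : a < b)
    (hβ : 40 < β * (b - a) ^ 2) :
    nesterovAction1D β a b (fun t => (t - a) * (b - t)) (fun t => a + b - 2 * t) < 0 := by
  rw [nesterovAction1D_bump]
  set s := b - a
  have hs : 0 < s := sub_pos.mpr hab
  set P := 7 / 60 * s ^ 6 + 2 / 5 * a * s ^ 5 + 1 / 2 * a ^ 2 * s ^ 4 + 1 / 3 * a ^ 3 * s ^ 3
  set Q := 1 / 168 * s ^ 8 + 1 / 35 * a * s ^ 7 + 1 / 20 * a ^ 2 * s ^ 6 + 1 / 30 * a ^ 3 * s ^ 5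
  have hPQ : 40 * Q - s ^ 2 * P =
      17 / 140 * s ^ 8 + 26 / 35 * a * s ^ 7 + 3 / 2 * a ^ 2 * s ^ 6 + a ^ 3 * s ^ 5 := by
    simp only [P, Q]
    ring
  have hPQ_nonneg : 0 ≤ 40 * Q - s ^ 2 * P := hPQ ▸ by positivity
  have hQ : 0 < Q := by positivity
  have : s ^ 2 * (P - β * Q) < 0 := by nlinarith [mul_lt_mul_of_pos_right hβ hQ]
  linarith [neg_of_mul_neg_right this (sq_nonneg s)]

theorem integral_sin_sq_mul_sub {a b k : ℝ} (hk : k ≠ 0) (hsin : Real.sin (k * (b - a)) = 0) :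
    ∫ t in a..b, Real.sin (k * (t - a)) ^ 2 = (b - a) / 2 := by
  simp only [mul_sub]
  rw [intervalIntegral.integral_comp_mul_sub (fun x => Real.sin x ^ 2) hk, integral_sin_sq]
  rw [mul_sub] at hsin
  simp [hsin]
  field_simp

theorem nesterovAction1D_sin_pos {β a b k : ℝ} (hβ : 0 ≤ β) (ha : 0 ≤ a) (hab : a < b)
    (hk : k ≠ 0) (hsin : Real.sin (k * (b - a)) = 0) (hkβ : β * b ^ 3 < k ^ 2 * a ^ 3) :
    0 < nesterovAction1D β a b (fun t => Real.sin (k * (t - a)))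
      (fun t => k * Real.cos (k * (t - a))) := by
  have lower : ∀ t ∈ Icc a b,
      k ^ 2 * a ^ 3 / 2 - (k ^ 2 * a ^ 3 + β * b ^ 3) / 2 * Real.sin (k * (t - a)) ^ 2 ≤
        t ^ 3 * ((1 / 2) * (k * Real.cos (k * (t - a))) ^ 2
          - β * Real.sin (k * (t - a)) ^ 2 / 2) := by
    rintro t ⟨hat, htb⟩
    have ha3 : a ^ 3 ≤ t ^ 3 := pow_le_pow_left₀ ha hat 3
    have hb3 : t ^ 3 ≤ b ^ 3 := pow_le_pow_left₀ (ha.trans hat) htb 3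
    have gap : 0 ≤ k ^ 2 * Real.cos (k * (t - a)) ^ 2 * (t ^ 3 - a ^ 3) / 2
        + β * Real.sin (k * (t - a)) ^ 2 * (b ^ 3 - t ^ 3) / 2 := by
      have := sub_nonneg.mpr ha3
      have := sub_nonneg.mpr hb3
      positivity
    linear_combination gap - k ^ 2 * a ^ 3 / 2 * Real.sin_sq_add_cos_sq (k * (t - a))
  have hlower : ∫ t in a..b,
      (k ^ 2 * a ^ 3 / 2 - (k ^ 2 * a ^ 3 + β * b ^ 3) / 2 * Real.sin (k * (t - a)) ^ 2) =
        (b - a) * (k ^ 2 * a ^ 3 - β * b ^ 3) / 4 := by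
    rw [intervalIntegral.integral_sub, intervalIntegral.integral_const,
      intervalIntegral.integral_const_mul, integral_sin_sq_mul_sub hk hsin, smul_eq_mul]
    · ring
    all_goals apply Continuous.intervalIntegrable; fun_prop
  calc 0 < (b - a) * (k ^ 2 * a ^ 3 - β * b ^ 3) / 4 := by
        have := sub_pos.mpr hab
        have := sub_pos.mpr hkβ
        positivity
    _ ≤ _ := hlower ▸ intervalIntegral.integral_mono_on hab.le
        (by apply Continuous.intervalIntegrable; fun_prop)
        (by apply Continuous.intervalIntegrable; fun_prop) lower

theorem exists_sin_mul_eq_zero_lt_sq {L : ℝ} (hL : 0 < L) (M : ℝ) :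
    ∃ k > 0, Real.sin (k * L) = 0 ∧ M < k ^ 2 := by
  obtain ⟨n, hn⟩ := exists_nat_gt (max M 1 * L / Real.pi)
  have hk : max M 1 < n * Real.pi / L := by
    rw [lt_div_iff₀ hL]
    rwa [div_lt_iff₀ Real.pi_pos] at hn
  refine ⟨n * Real.pi / L, by linarith [le_max_right M 1], ?_, ?_⟩
  · rw [div_mul_cancel₀ _ hL.ne']
    exact Real.sin_nat_mul_pi n
  · nlinarith [le_max_left M 1, le_max_right M 1]

theorem isAdmissiblePerturbation_sin {t₁ t₂ k : ℝ} (hsin : Real.sin (k * (t₂ - t₁)) = 0) :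
    IsAdmissiblePerturbation t₁ t₂ (fun t => Real.sin (k * (t - t₁)))
      (fun t => k * Real.cos (k * (t - t₁))) :=
  .of_hasDerivAt (fun t => ((((hasDerivAt_id' t).sub_const t₁).const_mul k).sin).congr_deriv
    (by ring)) (by fun_prop) (by simp) hsin

theorem isAdmissiblePerturbation_bump (t₁ t₂ : ℝ) :
    IsAdmissiblePerturbation t₁ t₂ (fun t => (t - t₁) * (t₂ - t)) (fun t => t₁ + t₂ - 2 * t) :=
  .of_hasDerivAt (fun t => (((hasDerivAt_id' t).sub_const t₁).mul
    ((hasDerivAt_id' t).const_sub t₂)).congr_deriv (by ring))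
    (by fun_prop) (by simp) (by simp)

theorem nesterov_vanishing_damping_saddle_general
    (β : ℝ) (hβ : 0 < β) (X X' X'' : ℝ → ℝ)
    (hX : ∀ t ∈ Ioi (0 : ℝ), HasDerivAt X (X' t) t)
    (hX' : ∀ t ∈ Ioi (0 : ℝ), HasDerivAt X' (X'' t) t)
    (hODE : ∀ t ∈ Ioi (0 : ℝ), X'' t + (3 / t) * X' t + β * X t = 0)
    (t₁ t₂ : ℝ) (ht₁ : 0 < t₁) (ht : t₁ < t₂)
    (hgap : t₂ - t₁ > Real.sqrt (40 / β)) :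
    ∀ δ > (0 : ℝ), ∃ hp hp' hm hm' : ℝ → ℝ,
      (∀ t ∈ Icc t₁ t₂, HasDerivWithinAt hp (hp' t) (Icc t₁ t₂) t) ∧
      ContinuousOn hp' (Icc t₁ t₂) ∧ hp t₁ = 0 ∧ hp t₂ = 0 ∧
      (∀ t ∈ Icc t₁ t₂, HasDerivWithinAt hm (hm' t) (Icc t₁ t₂) t) ∧
      ContinuousOn hm' (Icc t₁ t₂) ∧ hm t₁ = 0 ∧ hm t₂ = 0 ∧
      (⨆ t ∈ Icc t₁ t₂, |hp t|) + (⨆ t ∈ Icc t₁ t₂, |hp' t|) < δ ∧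
      (⨆ t ∈ Icc t₁ t₂, |hm t|) + (⨆ t ∈ Icc t₁ t₂, |hm' t|) < δ ∧
      nesterovAction1D β t₁ t₂ (X + hp) (X' + hp') > nesterovAction1D β t₁ t₂ X X' ∧
      nesterovAction1D β t₁ t₂ (X + hm) (X' + hm') < nesterovAction1D β t₁ t₂ X X' := by
  intro δ hδ
  obtain ⟨k, hk, hsin, hkβ⟩ := exists_sin_mul_eq_zero_lt_sq (sub_pos.2 ht) (β * t₂ ^ 3 / t₁ ^ 3)
  have hp_pos := nesterovAction1D_sin_pos hβ.le ht₁.le ht hk.ne' hsin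
    (by rwa [div_lt_iff₀ (by positivity)] at hkβ)
  have h40 : 40 < β * (t₂ - t₁) ^ 2 := by
    rwa [gt_iff_lt, Real.sqrt_lt' (by linarith), div_lt_iff₀' hβ] at hgap
  have hm_neg := nesterovAction1D_bump_neg (β := β) ht₁.le ht h40
  obtain ⟨cp, hcp, hp_small⟩ := exists_pos_c1NormOn_const_mul_lt hδ t₁ t₂
    (fun t => Real.sin (k * (t - t₁))) (fun t => k * Real.cos (k * (t - t₁)))
  obtain ⟨cm, hcm, hm_small⟩ := exists_pos_c1NormOn_const_mul_lt hδ t₁ t₂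
    (fun t => (t - t₁) * (t₂ - t)) (fun t => t₁ + t₂ - 2 * t)
  have hp := isAdmissiblePerturbation_sin hsin
  have hm := isAdmissiblePerturbation_bump t₁ t₂
  obtain ⟨hp₁, hp₂, hp₃, hp₄⟩ := hp.const_mul cp
  obtain ⟨hm₁, hm₂, hm₃, hm₄⟩ := hm.const_mul cm
  refine ⟨_, _, _, _, hp₁, hp₂, hp₃, hp₄, hm₁, hm₂, hm₃, hm₄, hp_small, hm_small, ?_, ?_⟩
  · rw [nesterovAction1D_add_const_mul_of_ode hX hX' hODE ht₁ ht.le hp]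
    exact lt_add_of_pos_right _ (mul_pos (pow_pos hcp 2) hp_pos)
  · rw [nesterovAction1D_add_const_mul_of_ode hX hX' hODE ht₁ ht.le hm]
    exact add_lt_of_neg_right _ (mul_neg_of_pos_of_neg (pow_pos hcm 2) hm_neg)

/-- **Nesterov's path with vanishing damping is a saddle point of the action** when
`t₂ - t₁ > √(40/β)`: arbitrarily small (in `C¹` norm) admissible perturbations can both
increase and decrease the action. -/
theorem nesterov_vanishing_damping_saddle
    (β : ℝ) (hβ : 0 < β) (X X' X'' : ℝ → ℝ)
    (hX : ∀ t ∈ Ioi (0 : ℝ), HasDerivAt X (X' t) t)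
    (hX' : ∀ t ∈ Ioi (0 : ℝ), HasDerivAt X' (X'' t) t)
    (hX'' : ContinuousOn X'' (Ioi (0 : ℝ)))
    (hODE : ∀ t ∈ Ioi (0 : ℝ), X'' t + (3 / t) * X' t + β * X t = 0)
    (t₁ t₂ : ℝ) (ht₁ : 0 < t₁) (ht : t₁ < t₂)
    (hgap : t₂ - t₁ > Real.sqrt (40 / β)) :
    ∀ δ > (0 : ℝ), ∃ hp hp' hm hm' : ℝ → ℝ,
      (∀ t ∈ Icc t₁ t₂, HasDerivWithinAt hp (hp' t) (Icc t₁ t₂) t) ∧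
      ContinuousOn hp' (Icc t₁ t₂) ∧ hp t₁ = 0 ∧ hp t₂ = 0 ∧
      (∀ t ∈ Icc t₁ t₂, HasDerivWithinAt hm (hm' t) (Icc t₁ t₂) t) ∧
      ContinuousOn hm' (Icc t₁ t₂) ∧ hm t₁ = 0 ∧ hm t₂ = 0 ∧
      (⨆ t ∈ Icc t₁ t₂, |hp t|) + (⨆ t ∈ Icc t₁ t₂, |hp' t|) < δ ∧
      (⨆ t ∈ Icc t₁ t₂, |hm t|) + (⨆ t ∈ Icc t₁ t₂, |hm' t|) < δ ∧
      nesterovAction1D β t₁ t₂ (X + hp) (X' + hp') > nesterovAction1D β t₁ t₂ X X' ∧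
      nesterovAction1D β t₁ t₂ (X + hm) (X' + hm') < nesterovAction1D β t₁ t₂ X X' :=
  nesterov_vanishing_damping_saddle_general β hβ X X' X'' hX hX' hODE t₁ t₂ ht₁ ht hgap
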